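/- arXiv:1512.04297 — 7 statements merged into one kernel-verified Lean document; each statement's English description precedes it below -/
import Mathlib

section
/- Let q be a prime power and let 1 ≤ k ≤ n be integers. The vector space 𝔽_q^n admits a k-spread (i.e., a partial k-spread whose members cover every nonzero vector, equivalently a partial k-spread of size (q^n − 1)/(q^k − 1)) if and only if k divides n. -/
/-!
Counting nonzero vectors shows that a `k`-spread of `𝔽_q^n` has exactly `(q^n - 1)/(q^k - 1)`
members, so `q^k - 1 ∣ q^n - 1`, which forces `k ∣ n` because
`gcd (q^k - 1) (q^n - 1) = q^(gcd k n) - 1`. Conversely, if `n = k m`, identify `𝔽_q^n` with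
`𝔽_{q^k}^m`: the `𝔽_{q^k}`-lines, viewed as `𝔽_q`-subspaces, form a `k`-spread.
-/

open Module Submodule

/-- A partial `k`-spread in `𝔽_q^n`: a set of `k`-dimensional subspaces
any two distinct members of which intersect trivially. -/
def IsPartialSpread (F : Type) [Field F] {n : ℕ} (k : ℕ)
    (S : Finset (Submodule F (Fin n → F))) : Prop :=
  (∀ U ∈ S, Module.finrank F U = k) ∧
  ∀ U ∈ S, ∀ V ∈ S, U ≠ V → U ⊓ V = ⊥

theorem Nat.dvd_of_pow_sub_one_dvd_pow_sub_one {q k n : ℕ} (hq : 1 < q)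
    (h : q ^ k - 1 ∣ q ^ n - 1) : k ∣ n := by
  have hgcd := Nat.gcd_eq_left h
  rw [Nat.pow_sub_one_gcd_pow_sub_one] at hgcd
  have hpow : q ^ Nat.gcd k n = q ^ k := by
    have := Nat.one_le_pow (Nat.gcd k n) q (by omega)
    have := Nat.one_le_pow k q (by omega)
    omega
  exact Nat.gcd_eq_left_iff_dvd.mp (Nat.pow_right_injective hq hpow)

def IsSpread (F : Type*) {V : Type*} [Field F] [AddCommGroup V] [Module F V] (k : ℕ)
    (S : Finset (Submodule F V)) : Prop :=
  (∀ U ∈ S, finrank F U = k) ∧ (∀ U ∈ S, ∀ U' ∈ S, U ≠ U' → U ⊓ U' = ⊥) ∧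
    ∀ v : V, v ≠ 0 → ∃ U ∈ S, v ∈ U

namespace IsSpread

variable {F V W : Type*} [Field F] [AddCommGroup V] [Module F V] [AddCommGroup W] [Module F W]
  {k : ℕ} {S : Finset (Submodule F V)}

theorem map_linearEquiv (hS : IsSpread F k S) (e : V ≃ₗ[F] W) :
    IsSpread F k (S.image fun U ↦ U.map (e : V →ₗ[F] W)) := by
  obtain ⟨hrank, hdisj, hcover⟩ := hS
  refine ⟨?_, ?_, fun w hw ↦ ?_⟩
  · simp only [Finset.forall_mem_image]
    intro U hU
    rw [LinearEquiv.finrank_map_eq, hrank U hU]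
  · simp only [Finset.forall_mem_image]
    intro U hU U' hU' hne
    rw [← Submodule.map_inf _ e.injective, hdisj U hU U' hU' (ne_of_apply_ne _ hne),
      Submodule.map_bot]
  · obtain ⟨U, hU, hmem⟩ := hcover (e.symm w) (by simpa using hw)
    exact ⟨U.map (e : V →ₗ[F] W), Finset.mem_image_of_mem _ hU, by simpa using hmem⟩

theorem natCard_sub_one_eq [Finite V] (hS : IsSpread F k S) :
    Nat.card V - 1 = S.card * (Nat.card F ^ k - 1) := by
  classical
  obtain ⟨hrank, hdisj, hcover⟩ := hS
  have := Fintype.ofFinite V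
  let nonzero (U : Submodule F V) : Finset V := ({v | v ∈ U} : Finset V).erase 0
  have hcard : ∀ U ∈ S, (nonzero U).card = Nat.card F ^ k - 1 := by
    intro U hU
    rw [Finset.card_erase_of_mem (by simp), ← Fintype.card_subtype, ← Nat.card_eq_fintype_card,
      Module.natCard_eq_pow_finrank (K := F), hrank U hU]
  have hunion : Finset.univ.erase 0 = S.biUnion nonzero := by
    ext v
    simp only [nonzero, Finset.mem_erase, Finset.mem_univ, and_true, Finset.mem_biUnion,
      Finset.mem_filter, true_and]
    exact ⟨fun hv ↦ (hcover v hv).imp fun U ⟨hU, hvU⟩ ↦ ⟨hU, hv, hvU⟩, fun ⟨_, _, hv, _⟩ ↦ hv⟩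
  have hpairwise : (S : Set (Submodule F V)).PairwiseDisjoint nonzero := by
    intro U hU U' hU' hne
    rw [Function.onFun, Finset.disjoint_left]
    intro v hv hv'
    simp only [nonzero, Finset.mem_erase, Finset.mem_filter, Finset.mem_univ, true_and] at hv hv'
    have : v ∈ U ⊓ U' := ⟨hv.2, hv'.2⟩
    rw [hdisj U hU U' hU' hne] at this
    exact hv.1 ((Submodule.mem_bot F).mp this)
  rw [Nat.card_eq_fintype_card, ← Finset.card_univ, ← Finset.card_erase_of_mem (Finset.mem_univ 0),
    hunion, Finset.card_biUnion hpairwise, Finset.sum_congr rfl hcard, Finset.sum_const, smul_eq_mul]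

end IsSpread

theorem exists_isSpread_restrictScalars_span_singleton (F K W : Type*) [Field F] [Field K]
    [Algebra F K] [AddCommGroup W] [Module K W] [Module F W] [IsScalarTower F K W] [Finite W] :
    ∃ S : Finset (Submodule F W), IsSpread F (finrank F K) S := by
  classical
  have := Fintype.ofFinite W
  refine ⟨(Finset.univ.erase 0).image fun w ↦ (K ∙ w).restrictScalars F, ?_, ?_, fun w hw ↦ ?_⟩
  · simp only [Finset.forall_mem_image, Finset.mem_erase]
    rintro w ⟨hw, -⟩
    exact (finrank_mul_finrank F K (K ∙ w)).symm.trans (by rw [finrank_span_singleton hw, mul_one])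
  · simp only [Finset.forall_mem_image, Finset.mem_erase]
    rintro w ⟨hw, -⟩ w' ⟨hw', -⟩ hne
    rw [← restrictScalars_inf, restrictScalars_eq_bot_iff, ← disjoint_iff]
    exact (nonzero_span_atom w hw).disjoint_of_ne (nonzero_span_atom w' hw') (ne_of_apply_ne _ hne)
  · exact ⟨_, Finset.mem_image_of_mem _ (by simpa using hw), mem_span_singleton_self w⟩

theorem exists_isSpread_of_dvd (F V : Type*) [Field F] [Finite F] [AddCommGroup V] [Module F V]
    [Finite V] {k : ℕ} (hk : k ≠ 0) (hkV : k ∣ finrank F V) :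
    ∃ S : Finset (Submodule F V), IsSpread F k S := by
  obtain ⟨m, hm⟩ := hkV
  obtain ⟨p, _⟩ := CharP.exists F
  have : Fact p.Prime := ⟨CharP.char_is_prime F p⟩
  have : NeZero k := ⟨hk⟩
  let K := FiniteField.Extension F p k
  obtain ⟨S, hS⟩ := exists_isSpread_restrictScalars_span_singleton F K (Fin m → K)
  rw [FiniteField.finrank_extension] at hS
  let e : (Fin m → K) ≃ₗ[F] V := LinearEquiv.ofFinrankEq _ _ <| by
    rw [← finrank_mul_finrank F K, FiniteField.finrank_extension, finrank_fin_fun, hm]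
  exact ⟨_, hS.map_linearEquiv e⟩

theorem spread_exists_iff_dvd_general (F : Type) [Field F] [Fintype F] (n k : ℕ)
    (hk : 1 ≤ k) :
    (∃ S : Finset (Submodule F (Fin n → F)),
        IsPartialSpread F k S ∧ ∀ v : Fin n → F, v ≠ 0 → ∃ U ∈ S, v ∈ U) ↔
      k ∣ n := by
  constructor
  · rintro ⟨S, ⟨hrank, hdisj⟩, hcover⟩
    have hcount := IsSpread.natCard_sub_one_eq ⟨hrank, hdisj, hcover⟩
    rw [Nat.card_fun, Nat.card_fin] at hcount
    exact Nat.dvd_of_pow_sub_one_dvd_pow_sub_one Finite.one_lt_card (Dvd.intro_left _ hcount.symm)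
  · intro hkn
    obtain ⟨S, hrank, hdisj, hcover⟩ :=
      exists_isSpread_of_dvd F (Fin n → F) (k := k) (by omega) (by rwa [finrank_fin_fun])
    exact ⟨S, ⟨hrank, hdisj⟩, hcover⟩

/-- `𝔽_q^n` admits a `k`-spread (a partial `k`-spread covering every nonzero
vector) if and only if `k ∣ n`. -/
theorem spread_exists_iff_dvd (F : Type) [Field F] [Fintype F] (n k : ℕ)
    (hk : 1 ≤ k) (hkn : k ≤ n) :
    (∃ S : Finset (Submodule F (Fin n → F)),
        IsPartialSpread F k S ∧ ∀ v : Fin n → F, v ≠ 0 → ∃ U ∈ S, v ∈ U) ↔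
      k ∣ n :=
  spread_exists_iff_dvd_general F n k hk
end

section
/- Let q be a prime power and let m, n, d be positive integers with m ≥ d and n ≥ d. If C is a set of m×n matrices over 𝔽_q such that any two distinct elements A, B of C satisfy rank(A − B) ≥ d, then |C| ≤ q^{max(n,m)·(min(n,m) − d + 1)}. Moreover, for all such m, n, d there exists a set C of m×n matrices over 𝔽_q attaining this bound, i.e., with |C| = q^{max(n,m)·(min(n,m) − d + 1)} and rank(A − B) ≥ d for all distinct A, B ∈ C. -/
/-!
Upper bound: puncturing a code, i.e. keeping only `m - d + 1` of the `m` rows, is injective on it,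
since two codewords agreeing on those rows differ by a matrix with at most `d - 1` nonzero rows,
hence of rank `< d`.

Existence (Gabidulin codes): identify `𝔽_q^m` with `𝔽_{q^m}`. For `a ∈ 𝔽_{q^m}^k`, `k = n - d + 1`,
the map `x ↦ ∑_{i<k} aᵢ x^(q^i)` is `𝔽_q`-linear and, for `a ≠ 0`, its kernel consists of roots of
a nonzero polynomial of degree `≤ q^(k-1)`, so it has dimension `< k`. Restricted to an
`n`-dimensional subspace its rank is therefore `≥ n - k + 1 = d`, and the `q^(mk)` choices of `a`
give pairwise distinct matrices at rank distance `≥ d`.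

Each half is proved in one orientation of the matrices; transposition gives the other.
-/

open Polynomial Module LinearMap FiniteField

section RankMetric

variable {R ι κ : Type*} [CommRing R] [Fintype κ]

def HasMinRankDistance (C : Finset (Matrix ι κ R)) (d : ℕ) : Prop :=
  ∀ A ∈ C, ∀ B ∈ C, A ≠ B → d ≤ (A - B).rank

theorem HasMinRankDistance.image_transpose {F : Type*} [Field F] [Fintype ι]
    [DecidableEq (Matrix κ ι F)] {C : Finset (Matrix ι κ F)} {d : ℕ}
    (hC : HasMinRankDistance C d) : HasMinRankDistance (C.image Matrix.transpose) d := by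
  simp only [HasMinRankDistance, Finset.forall_mem_image]
  intro A hA B hB hAB
  rw [← Matrix.transpose_sub, Matrix.rank_transpose]
  exact hC A hA B hB (ne_of_apply_ne _ hAB)

theorem HasMinRankDistance.card_le_of_card_compl_lt {F : Type*} [Field F] [Fintype F] [Fintype ι]
    [DecidableEq ι] {C : Finset (Matrix ι κ F)} {d : ℕ} (hC : HasMinRankDistance C d)
    (s : Finset ι) (hs : sᶜ.card < d) :
    C.card ≤ Fintype.card F ^ (Fintype.card κ * s.card) := by
  classical
  have hinj : Set.InjOn (fun (A : Matrix ι κ F) (i : s) => A i) C := by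
    intro A hA B hB hAB
    by_contra hne
    have hsupp : Function.support (A - B).row ⊆ ↑sᶜ := by
      intro i hi
      by_contra his
      simp only [Finset.coe_compl, Set.mem_compl_iff, not_not, Finset.mem_coe] at his
      exact hi (sub_eq_zero.2 (congrFun hAB ⟨i, his⟩))
    exact (hC A hA B hB hne).not_gt (((A - B).rank_le_card_of_support_subset _ hsupp).trans_lt hs)
  calc C.card ≤ Fintype.card (s → κ → F) :=
        Finset.card_le_card_of_injOn _ (fun _ _ => Finset.mem_coe.2 (Finset.mem_univ _)) hinj
    _ = Fintype.card F ^ (Fintype.card κ * s.card) := by simp [← pow_mul, mul_comm]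

theorem HasMinRankDistance.card_le {F : Type*} [Field F] [Fintype F] [Fintype ι]
    {C : Finset (Matrix ι κ F)} {d : ℕ} (hC : HasMinRankDistance C d) (hd : 0 < d)
    (hdι : d ≤ Fintype.card ι) :
    C.card ≤ Fintype.card F ^ (Fintype.card κ * (Fintype.card ι - d + 1)) := by
  classical
  obtain ⟨s, -, hs⟩ := Finset.exists_subset_card_eq (s := (Finset.univ : Finset ι))
    (n := Fintype.card ι - d + 1) (by rw [Finset.card_univ]; omega)
  rw [← hs]
  exact hC.card_le_of_card_compl_lt s (by rw [Finset.card_compl, hs]; omega)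

theorem exists_hasMinRankDistance_of_addMonoidHom [Nontrivial R] {W : Type*} [AddGroup W]
    [Fintype W] (φ : W →+ Matrix ι κ R) {d : ℕ} (hd : 0 < d) (hφ : ∀ w ≠ 0, d ≤ (φ w).rank) :
    ∃ C : Finset (Matrix ι κ R), HasMinRankDistance C d ∧ C.card = Fintype.card W := by
  classical
  have hinj : Function.Injective φ := (injective_iff_map_eq_zero φ).2 fun w hw => by
    by_contra hne
    simpa [hw, Matrix.rank_zero] using hd.trans_le (hφ w hne)
  refine ⟨Finset.univ.image φ, ?_, by rw [Finset.card_image_of_injective _ hinj, Finset.card_univ]⟩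
  simp only [HasMinRankDistance, Finset.forall_mem_image, Finset.mem_univ, true_implies]
  intro v w hvw
  rw [← map_sub]
  exact hφ _ (sub_ne_zero.2 (ne_of_apply_ne φ hvw))

end RankMetric

theorem finrank_comap_le_of_injective {F V W : Type*} [Field F] [AddCommGroup V] [Module F V]
    [AddCommGroup W] [Module F W] [FiniteDimensional F W] {f : V →ₗ[F] W}
    (hf : Function.Injective f) (S : Submodule F W) : finrank F (S.comap f) ≤ finrank F S :=
  calc finrank F (S.comap f) = finrank F ((S.comap f).map f) :=
        (Submodule.equivMapOfInjective f hf _).finrank_eq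
    _ ≤ finrank F S := Submodule.finrank_mono (Submodule.map_comap_le f S)

section LinearizedPoly

variable {K : Type*} [Semiring K] {k : ℕ}

noncomputable def linearizedPoly (q : ℕ) (a : Fin k → K) : K[X] :=
  ∑ i, C (a i) * X ^ q ^ (i : ℕ)

theorem natDegree_linearizedPoly_le {q : ℕ} (hq : 0 < q) (a : Fin k → K) :
    (linearizedPoly q a).natDegree ≤ q ^ (k - 1) :=
  natDegree_sum_le_of_forall_le _ _ fun i _ => (natDegree_C_mul_X_pow_le _ _).trans <|
    Nat.pow_le_pow_right hq (by omega)

theorem coeff_linearizedPoly {q : ℕ} (hq : 1 < q) (a : Fin k → K) (i : Fin k) :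
    (linearizedPoly q a).coeff (q ^ (i : ℕ)) = a i := by
  simp [linearizedPoly, finsetSum_coeff, (Nat.pow_right_injective hq).eq_iff, Fin.val_inj]

theorem linearizedPoly_ne_zero {q : ℕ} (hq : 1 < q) {a : Fin k → K} (ha : a ≠ 0) :
    linearizedPoly q a ≠ 0 := by
  obtain ⟨i, hi⟩ := Function.ne_iff.1 ha
  exact fun h => hi (by rw [← coeff_linearizedPoly hq a i, h, coeff_zero, Pi.zero_apply])

end LinearizedPoly

section LinearizedMap

variable (F : Type*) {K : Type*} [Field F] [Fintype F] [Field K] [Algebra F K] {k : ℕ}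

/-- `a ↦ (x ↦ ∑ i, a i * x ^ q ^ i)` with `q = #F`, written through the powers of the Frobenius
so that `F`-linearity in `x` and `K`-linearity in `a` come for free. -/
def linearizedMap : (Fin k → K) →ₗ[K] (K →ₗ[F] K) :=
  Fintype.linearCombination K fun i => ((frobeniusAlgHom F K) ^ (i : ℕ)).toLinearMap

variable {F}

theorem eval_linearizedPoly (a : Fin k → K) (x : K) :
    (linearizedPoly (Fintype.card F) a).eval x = linearizedMap F a x := by
  simp [linearizedPoly, linearizedMap, eval_finsetSum, Fintype.linearCombination_apply,
    coe_frobeniusAlgHom, pow_iterate]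

theorem finrank_ker_linearizedMap_lt [Finite K] {a : Fin k → K} (ha : a ≠ 0) :
    finrank F (ker (linearizedMap F a)) < k := by
  have hq : 1 < Fintype.card F := Fintype.one_lt_card
  have hroots : (ker (linearizedMap F a) : Set K) ⊆
      (linearizedPoly (Fintype.card F) a).rootSet K := by
    intro x hx
    rw [mem_rootSet, coe_aeval_eq_eval, eval_linearizedPoly]
    exact ⟨linearizedPoly_ne_zero hq ha, hx⟩
  have hcard : Fintype.card F ^ finrank F (ker (linearizedMap F a)) ≤ Fintype.card F ^ (k - 1) :=
    calc Fintype.card F ^ finrank F (ker (linearizedMap F a))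
        = Nat.card (ker (linearizedMap F a)) := by
          rw [Module.natCard_eq_pow_finrank (K := F), Nat.card_eq_fintype_card]
      _ ≤ ((linearizedPoly (Fintype.card F) a).rootSet K).ncard :=
          Set.ncard_le_ncard hroots (Set.toFinite _)
      _ ≤ (linearizedPoly (Fintype.card F) a).natDegree := ncard_rootSet_le _ _
      _ ≤ Fintype.card F ^ (k - 1) := natDegree_linearizedPoly_le Fintype.card_pos a
  obtain ⟨i, -⟩ := Function.ne_iff.1 ha
  have := (Nat.pow_le_pow_iff_right hq).1 hcard
  have := i.pos
  omega

end LinearizedMap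

theorem exists_hasMinRankDistance_of_finrank_eq {F K : Type*} [Field F] [Fintype F] [Field K]
    [Algebra F K] [Finite K] {m n d : ℕ} (hK : finrank F K = m) (hd : 0 < d) (hdn : d ≤ n)
    (hnm : n ≤ m) :
    ∃ C : Finset (Matrix (Fin m) (Fin n) F),
      HasMinRankDistance C d ∧ C.card = Fintype.card F ^ (m * (n - d + 1)) := by
  have := Fintype.ofFinite K
  obtain ⟨ι, hι⟩ := finrank_le_iff_exists_linearMap.1 ((finrank_fin_fun F).trans_le (hK ▸ hnm))
  let b := finBasisOfFinrankEq F K hK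
  let φ : (Fin (n - d + 1) → K) →+ Matrix (Fin m) (Fin n) F :=
    AddMonoidHom.mk' (fun a => toMatrix (Pi.basisFun F (Fin n)) b (linearizedMap F a ∘ₗ ι))
      fun a a' => by simp [LinearMap.add_comp]
  obtain ⟨C, hC, hcard⟩ := exists_hasMinRankDistance_of_addMonoidHom φ hd fun a ha => by
    have hrank : (φ a).rank = finrank F (range (linearizedMap F a ∘ₗ ι)) := by
      rw [AddMonoidHom.mk'_apply, Matrix.rank_eq_finrank_range_toLin _ b (Pi.basisFun F (Fin n)),
        Matrix.toLin_toMatrix]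
    have hrank_nullity := finrank_range_add_finrank_ker (linearizedMap F a ∘ₗ ι)
    rw [ker_comp, finrank_fin_fun] at hrank_nullity
    have := finrank_comap_le_of_injective hι (ker (linearizedMap F a))
    have := finrank_ker_linearizedMap_lt (F := F) ha
    omega
  refine ⟨C, hC, ?_⟩
  rw [hcard, Fintype.card_fun, Fintype.card_fin, card_eq_pow_finrank (K := F), hK, ← pow_mul]

theorem exists_hasMinRankDistance_card_eq (F : Type*) [Field F] [Fintype F] {m n d : ℕ}
    (hd : 0 < d) (hdn : d ≤ n) (hnm : n ≤ m) :
    ∃ C : Finset (Matrix (Fin m) (Fin n) F),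
      HasMinRankDistance C d ∧ C.card = Fintype.card F ^ (m * (n - d + 1)) := by
  have : Fact (ringChar F).Prime := ⟨CharP.char_is_prime F _⟩
  have : NeZero m := ⟨by omega⟩
  exact exists_hasMinRankDistance_of_finrank_eq (finrank_extension F (ringChar F) m) hd hdn hnm

theorem rank_metric_code_bound_and_MRD_general (F : Type) [Field F] [Fintype F]
    (q m n d : ℕ) (hq : Fintype.card F = q)
    (hd : 0 < d) (hdm : d ≤ m) (hdn : d ≤ n) :
    (∀ C : Finset (Matrix (Fin m) (Fin n) F),
        (∀ A ∈ C, ∀ B ∈ C, A ≠ B → d ≤ (A - B).rank) →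
        C.card ≤ q ^ (max n m * (min n m - d + 1))) ∧
    (∃ C : Finset (Matrix (Fin m) (Fin n) F),
        (∀ A ∈ C, ∀ B ∈ C, A ≠ B → d ≤ (A - B).rank) ∧
        C.card = q ^ (max n m * (min n m - d + 1))) := by
  classical
  subst hq
  rcases le_total m n with hmn | hnm
  · rw [max_eq_left hmn, min_eq_right hmn]
    refine ⟨fun C hC => ?_, ?_⟩
    · simpa only [Fintype.card_fin] using
        HasMinRankDistance.card_le hC hd (by rwa [Fintype.card_fin])
    · obtain ⟨C, hC, hcard⟩ := exists_hasMinRankDistance_card_eq F hd hdm hmn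
      refine ⟨C.image Matrix.transpose, hC.image_transpose, ?_⟩
      rw [Finset.card_image_of_injective _ Matrix.transpose_injective, hcard]
  · rw [max_eq_right hnm, min_eq_left hnm]
    refine ⟨fun C hC => ?_, exists_hasMinRankDistance_card_eq F hd hdn hnm⟩
    have hCt := HasMinRankDistance.image_transpose (C := C) hC
    simpa only [Finset.card_image_of_injective _ Matrix.transpose_injective, Fintype.card_fin]
      using hCt.card_le hd (by rwa [Fintype.card_fin])

/-- Singleton-type bound for rank-metric codes and existence of MRD codes:
any set of `m × n` matrices over `𝔽_q` with pairwise rank distance at least `d`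
has size at most `q^(max n m · (min n m − d + 1))`, and this bound is attained. -/
theorem rank_metric_code_bound_and_MRD (F : Type) [Field F] [Fintype F]
    (q m n d : ℕ) (hq : Fintype.card F = q)
    (hm : 0 < m) (hn : 0 < n) (hd : 0 < d) (hdm : d ≤ m) (hdn : d ≤ n) :
    (∀ C : Finset (Matrix (Fin m) (Fin n) F),
        (∀ A ∈ C, ∀ B ∈ C, A ≠ B → d ≤ (A - B).rank) →
        C.card ≤ q ^ (max n m * (min n m - d + 1))) ∧
    (∃ C : Finset (Matrix (Fin m) (Fin n) F),
        (∀ A ∈ C, ∀ B ∈ C, A ≠ B → d ≤ (A - B).rank) ∧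
        C.card = q ^ (max n m * (min n m - d + 1))) :=
  rank_metric_code_bound_and_MRD_general F q m n d hq hd hdm hdn
end

section
/- Let q be a prime power and let k, n be positive integers with n > 2k and n not divisible by k. Then there exists a partial k-spread in 𝔽_q^n of cardinality (q^n − q^{k + (n mod k)} + q^k − 1)/(q^k − 1) = 1 + Σ_{i=1}^{⌊n/k⌋ − 1} q^{n − ik}. -/
open Function Module Finset

namespace LinearMap

variable {R M N : Type*} [Ring R] [AddCommGroup M] [Module R M] [AddCommGroup N] [Module R N]

theorem disjoint_graph_graph {f g : M →ₗ[R] N} (h : Injective (f - g)) :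
    Disjoint f.graph g.graph := by
  rw [Submodule.disjoint_def]
  rintro ⟨x, y⟩ (hf : y = f x) (hg : y = g x)
  have hx : x = 0 := h (by simp [← hf, ← hg])
  simp [hx, hf]

theorem disjoint_graph_range_inr (f : M →ₗ[R] N) : Disjoint f.graph (range (inr R M N)) := by
  rw [range_inr, Submodule.disjoint_def]
  rintro ⟨x, y⟩ (hf : y = f x) (hx : x = 0)
  simp [hx, hf]

theorem finrank_graph (f : M →ₗ[R] N) : finrank R f.graph = finrank R M := by
  rw [graph_eq_range_prod, finrank_range_of_inj]
  exact fun x y h => congr_arg Prod.fst h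

end LinearMap

namespace Submodule

variable {F V V' : Type*} [Field F] [AddCommGroup V] [Module F V] [AddCommGroup V'] [Module F V']

def IsPartialSpread (k : ℕ) (S : Finset (Submodule F V)) : Prop :=
  (∀ U ∈ S, finrank F U = k) ∧ (S : Set (Submodule F V)).PairwiseDisjoint id

namespace IsPartialSpread

variable {k : ℕ} {S T : Finset (Submodule F V)}

theorem singleton {U : Submodule F V} (hU : finrank F U = k) : IsPartialSpread k {U} :=
  ⟨by simpa using hU, by simp⟩

theorem image_map {f : V →ₗ[F] V'} (hf : Injective f) (hS : IsPartialSpread k S) :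
    IsPartialSpread k (S.image (map f)) := by
  refine ⟨?_, ?_⟩
  · simp only [mem_image, forall_exists_index, and_imp, forall_apply_eq_imp_iff₂]
    intro U hU
    rw [← (equivMapOfInjective f hf U).finrank_eq, hS.1 U hU]
  · rintro _ hU _ hU' hne
    simp only [coe_image, Set.mem_image, mem_coe] at hU hU'
    obtain ⟨U, hU, rfl⟩ := hU
    obtain ⟨U', hU', rfl⟩ := hU'
    exact disjoint_map hf (hS.2 hU hU' (ne_of_apply_ne _ hne))

theorem union (hk : k ≠ 0) (hS : IsPartialSpread k S) (hT : IsPartialSpread k T)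
    (hST : ∀ U ∈ S, ∀ U' ∈ T, Disjoint U U') :
    IsPartialSpread k (S ∪ T) ∧ (S ∪ T).card = S.card + T.card := by
  refine ⟨⟨?_, ?_⟩, card_union_of_disjoint ?_⟩
  · intro U hU
    rcases mem_union.1 hU with h | h
    exacts [hS.1 U h, hT.1 U h]
  · rw [coe_union]
    exact hS.2.union hT.2 fun U hU U' hU' _ => hST U hU U' hU'
  · rw [Finset.disjoint_left]
    intro U hUS hUT
    have : U = ⊥ := disjoint_self.1 (hST U hUS U hUT)
    exact hk (by rw [← hS.1 U hUS, this, finrank_bot])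

end IsPartialSpread

end Submodule

section MulGraph

variable {F K W : Type*} [Field F] [Field K] [Algebra F K] [AddCommGroup W] [Module F W]
  {ι : W →ₗ[F] K}

variable (ι) in
def mulGraph (α : K) : Submodule F (W × K) :=
  ((LinearMap.mulLeft F α).comp ι).graph

theorem mem_mulGraph {α : K} {p : W × K} : p ∈ mulGraph ι α ↔ p.2 = α * ι p.1 := Iff.rfl

theorem pairwise_disjoint_mulGraph (hι : Injective ι) :
    Pairwise (Disjoint on (mulGraph ι)) := by
  intro α β hαβ
  refine LinearMap.disjoint_graph_graph fun x y hxy => hι ?_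
  simpa [← sub_mul, sub_ne_zero.2 hαβ] using hxy

theorem mulGraph_injective [Nontrivial W] (hι : Injective ι) :
    Injective (mulGraph ι) := by
  intro α β hαβ
  obtain ⟨x, hx⟩ := exists_ne (0 : W)
  have hmem : (x, α * ι x) ∈ mulGraph ι β := hαβ ▸ rfl
  exact mul_right_cancel₀ ((hι.ne_iff' (map_zero ι)).2 hx) (mem_mulGraph.1 hmem)

end MulGraph

namespace Submodule.IsPartialSpread

variable {F K W : Type*} [Field F] [Field K] [Algebra F K] [AddCommGroup W] [Module F W]

theorem exists_prod_card_eq [Fintype K] {k : ℕ} (hk : 0 < k) {ι : W →ₗ[F] K} (hι : Injective ι)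
    (hW : finrank F W = k) {S : Finset (Submodule F K)} (hS : IsPartialSpread k S) :
    ∃ T : Finset (Submodule F (W × K)), IsPartialSpread k T ∧ T.card = Fintype.card K + S.card := by
  classical
  have : Nontrivial W := nontrivial_of_finrank_pos (hW ▸ hk)
  have hgraphs : IsPartialSpread k (univ.image (mulGraph ι)) := by
    refine ⟨by simp [mulGraph, LinearMap.finrank_graph, hW], ?_⟩
    rw [coe_image, (mulGraph_injective hι).injOn.pairwiseDisjoint_image]
    exact (pairwise_disjoint_mulGraph hι).set_pairwise _
  have hdisj : ∀ U ∈ univ.image (mulGraph ι), ∀ U' ∈ S.image (map (LinearMap.inr F W K)),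
      Disjoint U U' := by
    simp only [mem_image, mem_univ, true_and, forall_exists_index, forall_apply_eq_imp_iff,
      and_imp, forall_apply_eq_imp_iff₂]
    exact fun α U _ => (LinearMap.disjoint_graph_range_inr _).mono_right LinearMap.map_le_range
  obtain ⟨hT, hcard⟩ := hgraphs.union hk.ne' (hS.image_map LinearMap.inr_injective) hdisj
  refine ⟨_, hT, ?_⟩
  rw [hcard, card_image_of_injective _ (mulGraph_injective hι), card_univ,
    card_image_of_injective _ (map_injective_of_injective LinearMap.inr_injective)]

end Submodule.IsPartialSpread

-- `V : Type` because the induction passes through `FiniteField.Extension`, which lives in `Type`.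
theorem Submodule.exists_isPartialSpread_card_eq {F : Type*} [Field F] [Fintype F] {k b : ℕ}
    (hk : 0 < k) (hkb : k ≤ b) (j : ℕ) (V : Type) [AddCommGroup V] [Module F V]
    [FiniteDimensional F V] (hV : finrank F V = k * j + b) :
    ∃ S : Finset (Submodule F V),
      IsPartialSpread k S ∧ S.card = 1 + ∑ i ∈ range j, Fintype.card F ^ (k * i + b) := by
  induction j generalizing V with
  | zero =>
    obtain ⟨ι, hι⟩ := (finrank_le_iff_exists_linearMap (M := Fin k → F) (M' := V)).1
      (by rw [finrank_fin_fun, hV]; omega)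
    refine ⟨{LinearMap.range ι}, .singleton ?_, by simp⟩
    rw [LinearMap.finrank_range_of_inj hι, finrank_fin_fun]
  | succ j ih =>
    obtain ⟨p, _⟩ := CharP.exists F
    have : Fact p.Prime := ⟨CharP.char_is_prime F p⟩
    have : NeZero (k * j + b) := ⟨by omega⟩
    let K := FiniteField.Extension F p (k * j + b)
    have hK : finrank F K = k * j + b := FiniteField.finrank_extension F p _
    have := Fintype.ofFinite K
    obtain ⟨S, hS, hScard⟩ := ih K hK
    obtain ⟨ι, hι⟩ := (finrank_le_iff_exists_linearMap (M := Fin k → F) (M' := K)).1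
      (by rw [finrank_fin_fun, hK]; omega)
    obtain ⟨T, hT, hTcard⟩ := hS.exists_prod_card_eq hk hι (finrank_fin_fun F)
    let e : ((Fin k → F) × K) ≃ₗ[F] V :=
      LinearEquiv.ofFinrankEq _ _ (by rw [finrank_prod, finrank_fin_fun, hK, hV]; ring)
    refine ⟨T.image (map e), hT.image_map e.injective, ?_⟩
    rw [card_image_of_injective _ (map_injective_of_injective e.injective), hTcard, hScard,
      card_eq_pow_finrank (K := F), hK, sum_range_succ]
    ring

theorem Nat.pow_sub_pow_add_pow_sub_one_div_eq {q k : ℕ} (b j : ℕ) (h : 1 < q ^ k) :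
    (q ^ (k * j + b) - q ^ b + q ^ k - 1) / (q ^ k - 1) = 1 + ∑ i ∈ range j, q ^ (k * i + b) := by
  have hgeom : (∑ i ∈ range j, q ^ (k * i + b)) * (q ^ k - 1) + q ^ b = q ^ (k * j + b) := by
    have := geom_sum_mul_add (q ^ k - 1) j
    rw [Nat.sub_add_cancel h.le] at this
    simp_rw [pow_add, ← sum_mul, pow_mul, ← this]
    ring
  apply Nat.div_eq_of_eq_mul_left (by omega)
  rw [add_mul, one_mul]
  omega

theorem Nat.sum_Icc_pow_sub_mul_eq_sum_range {q k b j n : ℕ} (hn : n = k * j + b) :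
    ∑ i ∈ Icc 1 j, q ^ (n - i * k) = ∑ i ∈ range j, q ^ (k * i + b) := by
  subst hn
  refine sum_nbij' (j - ·) (j - ·) ?_ ?_ ?_ ?_ ?_ <;> intro i hi <;>
    simp only [mem_Icc, mem_range] at hi ⊢ <;> try omega
  rw [Nat.mul_sub, mul_comm i k, Nat.sub_add_comm (Nat.mul_le_mul_left k hi.2)]

theorem partial_spread_construction_general (F : Type) [Field F] [Fintype F]
    (q k n : ℕ) (hq : Fintype.card F = q)
    (hk : 0 < k) (hn : 2 * k < n) :
    (q ^ n - q ^ (k + n % k) + q ^ k - 1) / (q ^ k - 1)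
      = 1 + ∑ i ∈ Finset.Icc 1 (n / k - 1), q ^ (n - i * k) ∧
    ∃ S : Finset (Submodule F (Fin n → F)),
      IsPartialSpread F k S ∧
      S.card = (q ^ n - q ^ (k + n % k) + q ^ k - 1) / (q ^ k - 1) := by
  subst hq
  have hn_eq : n = k * (n / k - 1) + (k + n % k) := by
    have := Nat.div_add_mod n k
    have : k ≤ k * (n / k) := Nat.le_mul_of_pos_right k (Nat.div_pos (by omega) hk)
    rw [Nat.mul_sub_one]
    omega
  have hcard := Nat.pow_sub_pow_add_pow_sub_one_div_eq (k + n % k) (n / k - 1)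
    (Nat.one_lt_pow hk.ne' (Fintype.one_lt_card (α := F)))
  rw [← hn_eq] at hcard
  obtain ⟨S, hS, hScard⟩ := Submodule.exists_isPartialSpread_card_eq hk (Nat.le_add_right k _)
    (n / k - 1) (Fin n → F) (by rw [finrank_fin_fun, ← hn_eq])
  refine ⟨by rw [hcard, Nat.sum_Icc_pow_sub_mul_eq_sum_range hn_eq], S, ?_, hcard ▸ hScard⟩
  exact ⟨hS.1, fun U hU V hV hUV => disjoint_iff.1 (hS.2 hU hV hUV)⟩

/-- For `n > 2k` with `k ∤ n` there is a partial `k`-spread in `𝔽_q^n` of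
cardinality `(q^n − q^(k + (n mod k)) + q^k − 1)/(q^k − 1)
= 1 + Σ_{i=1}^{⌊n/k⌋−1} q^(n − ik)`. -/
theorem partial_spread_construction (F : Type) [Field F] [Fintype F]
    (q k n : ℕ) (hq : Fintype.card F = q)
    (hk : 0 < k) (hn : 2 * k < n) (hndvd : ¬ k ∣ n) :
    (q ^ n - q ^ (k + n % k) + q ^ k - 1) / (q ^ k - 1)
      = 1 + ∑ i ∈ Finset.Icc 1 (n / k - 1), q ^ (n - i * k) ∧
    ∃ S : Finset (Submodule F (Fin n → F)),
      IsPartialSpread F k S ∧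
      S.card = (q ^ n - q ^ (k + n % k) + q ^ k - 1) / (q ^ k - 1) :=
  partial_spread_construction_general F q k n hq hk hn
end

section
/- Let t ≥ 1 and k ≥ 4 be integers, and set n_k = (2^{kt+2} + 2^k − 5)/(2^k − 1) and n_{k−1} = 2^{kt+2} − 3. Then there is no vector space partition of 𝔽_2^{k(t+1)+1} consisting of exactly n_k subspaces of dimension k, exactly n_{k−1} subspaces of dimension k−1, and exactly 1 + 2^{k−1} subspaces of dimension 1 (and no subspaces of any other dimension). -/
/-!
Let `T` be the set of nonzero vectors of `𝔽_2^N` covered by the one-dimensional members. Every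
other member, and `𝔽_2^N` itself, has dimension at least `k - 1`, so it meets each affine
hyperplane `{x | w ⬝ᵥ x = 1}` in `0` or `2 ^ (dim - 1)` vectors; hence the number `c w` of points
of `T` on the hyperplane is a multiple of `a = 2 ^ (k - 2)`. Since `|T| = 2a + 1`, this forces
`c w ∈ {0, a, 2a}`, i.e. the Walsh sums `W w = ∑_{x ∈ T} (-1) ^ (w ⬝ᵥ x)` satisfy
`(W - 1) ^ 3 = (2a) ^ 2 (W - 1)`. Summing over `w` and using orthogonality (`∑ W = 0`,
`∑ W ^ 2 = 2 ^ N |T|`, and `∑ W ^ 3 ≥ 0` since it counts solutions of `x + y + z = 0` in `T`)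
gives `0 ≤ ∑ W ^ 3 = -2 ^ (N + 1) (2a + 1)(a - 2)`, so `a ≤ 2`, contradicting `k ≥ 4`.
-/

open Finset Module

theorem Finset.card_filter_exists_eq_sum_card_filter {α β : Type*} {r : α → β → Prop}
    [∀ a b, Decidable (r a b)] (s : Finset α) (t : Finset β)
    (huniq : ∀ a ∈ s, ∀ b ∈ t, ∀ b' ∈ t, r a b → r a b' → b = b') :
    #{a ∈ s | ∃ b ∈ t, r a b} = ∑ b ∈ t, #{a ∈ s | r a b} := by
  change _ = ∑ b ∈ t, #(s.bipartiteBelow r b)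
  rw [← sum_card_bipartiteAbove_eq_sum_card_bipartiteBelow, card_filter]
  refine sum_congr rfl fun a ha => ?_
  split_ifs with h
  · obtain ⟨b, hb, hab⟩ := h
    refine (card_eq_one.2 ⟨b, eq_singleton_iff_unique_mem.2
      ⟨mem_filter.2 ⟨hb, hab⟩, ?_⟩⟩).symm
    exact fun b' hb' => huniq a ha b' (mem_filter.1 hb').1 b hb (mem_filter.1 hb').2 hab
  · exact (card_eq_zero.2 (filter_eq_empty_iff.2 fun b hb hab => h ⟨b, hb, hab⟩)).symm

theorem Nat.eq_zero_or_eq_or_eq_two_mul_of_dvd_of_le {a c : ℕ} (ha : 2 ≤ a) (hdvd : a ∣ c)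
    (hle : c ≤ 2 * a + 1) : c = 0 ∨ c = a ∨ c = 2 * a := by
  obtain ⟨q, rfl⟩ := hdvd
  have hq : q ≤ 2 := by
    by_contra! hq
    nlinarith
  interval_cases q <;> simp [mul_comm]

section OverZModTwo

open scoped Classical

variable {V : Type*} [AddCommGroup V] [Module (ZMod 2) V] [Fintype V]

theorem card_filter_mem_submodule (U : Submodule (ZMod 2) V) :
    #{x | x ∈ U} = 2 ^ finrank (ZMod 2) U := by
  rw [← Fintype.card_subtype, card_eq_pow_finrank (K := ZMod 2), ZMod.card]

theorem card_filter_mem_and_ne_zero (U : Submodule (ZMod 2) V) :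
    #{x | x ∈ U ∧ x ≠ 0} = 2 ^ finrank (ZMod 2) U - 1 := by
  rw [← filter_filter, filter_ne', card_erase_of_mem (by simp), card_filter_mem_submodule]

theorem card_filter_mem_and_apply_eq_one (φ : V →ₗ[ZMod 2] ZMod 2) (U : Submodule (ZMod 2) V) :
    #{x | x ∈ U ∧ φ x = 1} = 0 ∨
      #{x | x ∈ U ∧ φ x = 1} = 2 ^ (finrank (ZMod 2) U - 1) := by
  by_cases h : ∃ x₀ ∈ U, φ x₀ = 1
  swap
  · push Not at h
    exact Or.inl (card_eq_zero.2 (filter_eq_empty_iff.2 fun x _ hx => h x hx.1 hx.2))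
  right
  obtain ⟨x₀, hx₀U, hx₀⟩ := h
  have hflip : ∀ a : ZMod 2, a + 1 = 1 ↔ ¬ a = 1 := by decide
  have hhalves : #{x | x ∈ U ∧ φ x = 1} = #{x | x ∈ U ∧ ¬ φ x = 1} := by
    refine card_nbij' (· + x₀) (· + x₀) ?_ ?_ ?_ ?_ <;>
      simp [Set.MapsTo, Set.LeftInvOn, hx₀, hflip, add_assoc, ZModModule.add_self,
        Submodule.add_mem_iff_left _ hx₀U]
  have htotal :=
    card_filter_add_card_filter_not (s := ({x | x ∈ U} : Finset V)) (fun x => φ x = 1)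
  simp only [filter_filter, card_filter_mem_submodule] at htotal
  have hpos : finrank (ZMod 2) U ≠ 0 := by
    intro h0
    rw [h0] at htotal
    omega
  rw [← Nat.sub_one_add_one hpos, pow_succ] at htotal
  omega

theorem two_pow_dvd_card_filter_mem_and_apply_eq_one {m : ℕ} (φ : V →ₗ[ZMod 2] ZMod 2)
    {U : Submodule (ZMod 2) V} (hm : m < finrank (ZMod 2) U) :
    2 ^ m ∣ #{x | x ∈ U ∧ φ x = 1} := by
  rcases card_filter_mem_and_apply_eq_one φ U with h | h <;> rw [h]
  · exact dvd_zero _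
  · exact pow_dvd_pow 2 (by omega)

noncomputable def tailVectors (P : Finset (Submodule (ZMod 2) V)) : Finset V :=
  {x | x ≠ 0 ∧ ∃ U ∈ P, finrank (ZMod 2) U = 1 ∧ x ∈ U}

variable {P : Finset (Submodule (ZMod 2) V)}

theorem zero_notMem_tailVectors : 0 ∉ tailVectors P := by
  simp [tailVectors]

theorem card_filter_and_exists_mem_eq_sum (hP : ∀ v : V, v ≠ 0 → ∃! U, U ∈ P ∧ v ∈ U)
    (Q : Finset (Submodule (ZMod 2) V)) (hQ : Q ⊆ P) (p : V → Prop) [DecidablePred p]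
    (hp : ∀ x, p x → x ≠ 0) :
    #{x | p x ∧ ∃ U ∈ Q, x ∈ U} = ∑ U ∈ Q, #{x | x ∈ U ∧ p x} := by
  have h := card_filter_exists_eq_sum_card_filter (r := fun x (U : Submodule (ZMod 2) V) => x ∈ U)
    {x | p x} Q fun x hx U hU U' hU' hxU hxU' =>
      (hP x (hp x (mem_filter.1 hx).2)).unique ⟨hQ hU, hxU⟩ ⟨hQ hU', hxU'⟩
  simpa only [filter_filter, and_comm (a := p _)] using h

theorem card_tailVectors (hP : ∀ v : V, v ≠ 0 → ∃! U, U ∈ P ∧ v ∈ U) :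
    #(tailVectors P) = #(P.filter fun U : Submodule (ZMod 2) V => finrank (ZMod 2) U = 1) := by
  set P₁ := P.filter fun U : Submodule (ZMod 2) V => finrank (ZMod 2) U = 1
  have htail : tailVectors P = ({x | x ≠ 0 ∧ ∃ U ∈ P₁, x ∈ U} : Finset V) := by
    ext x
    simp [tailVectors, P₁, and_assoc]
  rw [htail, card_filter_and_exists_mem_eq_sum hP P₁ (filter_subset _ P) _ fun _ => id,
    card_eq_sum_ones]
  refine sum_congr rfl fun U hU => ?_
  rw [card_filter_mem_and_ne_zero, (mem_filter.1 hU).2]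
  rfl

theorem two_pow_dvd_card_filter_tailVectors {m : ℕ}
    (hP : ∀ v : V, v ≠ 0 → ∃! U, U ∈ P ∧ v ∈ U)
    (hdim : ∀ U ∈ P, finrank (ZMod 2) U ≠ 1 → m < finrank (ZMod 2) U)
    (hm : m < finrank (ZMod 2) V) (φ : V →ₗ[ZMod 2] ZMod 2) :
    2 ^ m ∣ #{x ∈ tailVectors P | φ x = 1} := by
  have hne : ∀ x, φ x = 1 → x ≠ 0 := fun x hx h0 => by simp [h0] at hx
  set P₁ := P.filter fun U : Submodule (ZMod 2) V => finrank (ZMod 2) U = 1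
  have hall : #{x | φ x = 1} = ∑ U ∈ P, #{x | x ∈ U ∧ φ x = 1} := by
    rw [← card_filter_and_exists_mem_eq_sum hP P subset_rfl _ hne]
    congr 1
    ext x
    simp only [mem_filter, mem_univ, true_and, iff_self_and]
    intro hx
    obtain ⟨U, hU, -⟩ := hP x (hne x hx)
    exact ⟨U, hU⟩
  have htail : #{x ∈ tailVectors P | φ x = 1} = ∑ U ∈ P₁, #{x | x ∈ U ∧ φ x = 1} := by
    rw [← card_filter_and_exists_mem_eq_sum hP P₁ (filter_subset _ P) _ hne]
    congr 1
    ext x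
    simp only [tailVectors, P₁, mem_filter, mem_univ, true_and, and_assoc]
    exact ⟨fun ⟨_, h, hx⟩ => ⟨hx, h⟩, fun ⟨hx, h⟩ => ⟨hne x hx, h, hx⟩⟩
  have hhyperplane : 2 ^ m ∣ #{x | φ x = 1} := by
    simpa using two_pow_dvd_card_filter_mem_and_apply_eq_one φ (U := ⊤) (by rwa [finrank_top])
  have hbig : 2 ^ m ∣
      ∑ U ∈ P.filter (fun U : Submodule (ZMod 2) V => ¬ finrank (ZMod 2) U = 1),
        #{x | x ∈ U ∧ φ x = 1} :=
    dvd_sum fun U hU => two_pow_dvd_card_filter_mem_and_apply_eq_one φ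
      (hdim U (mem_filter.1 hU).1 (mem_filter.1 hU).2)
  rw [hall, ← sum_filter_add_sum_filter_not P fun U => finrank (ZMod 2) U = 1] at hhyperplane
  rw [htail]
  exact (Nat.dvd_add_left hbig).1 hhyperplane

end OverZModTwo

section Walsh

variable {n : ℕ}

def sign2 (a : ZMod 2) : ℤ := if a = 0 then 1 else -1

theorem sign2_add : ∀ a b : ZMod 2, sign2 (a + b) = sign2 a * sign2 b := by decide

theorem sum_sign2_dotProduct (v : Fin n → ZMod 2) :
    ∑ w : Fin n → ZMod 2, sign2 (w ⬝ᵥ v) = if v = 0 then 2 ^ n else 0 := by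
  split_ifs with hv
  · simp [hv, sign2]
  obtain ⟨i, hi⟩ : ∃ i, v i ≠ 0 := by
    by_contra! h
    exact hv (funext h)
  have hflip : ∀ w : Fin n → ZMod 2,
      sign2 ((w + Pi.single i 1) ⬝ᵥ v) = -sign2 (w ⬝ᵥ v) := by
    intro w
    have hvi : v i = 1 := (by decide : ∀ a : ZMod 2, a ≠ 0 → a = 1) _ hi
    rw [add_dotProduct, single_dotProduct, one_mul, hvi, sign2_add]
    simp [sign2]
  have h := Equiv.sum_comp (Equiv.addRight (Pi.single i 1 : Fin n → ZMod 2))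
    fun w => sign2 (w ⬝ᵥ v)
  simp only [Equiv.coe_addRight, hflip, sum_neg_distrib] at h
  linarith

theorem sum_sign2_dotProduct_nonneg (v : Fin n → ZMod 2) :
    0 ≤ ∑ w : Fin n → ZMod 2, sign2 (w ⬝ᵥ v) := by
  rw [sum_sign2_dotProduct]
  split_ifs <;> positivity

def walsh (T : Finset (Fin n → ZMod 2)) (w : Fin n → ZMod 2) : ℤ :=
  ∑ x ∈ T, sign2 (w ⬝ᵥ x)

variable (T : Finset (Fin n → ZMod 2))

theorem walsh_eq_card_sub (w : Fin n → ZMod 2) :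
    walsh T w = #T - 2 * #{x ∈ T | w ⬝ᵥ x = 1} := by
  have h : ∀ a : ZMod 2, sign2 a = 1 - 2 * if a = 1 then 1 else 0 := by decide
  simp only [walsh, h, sum_sub_distrib, ← mul_sum, sum_boole, sum_const, nsmul_one]

theorem walsh_sq (w : Fin n → ZMod 2) :
    walsh T w ^ 2 = ∑ x ∈ T, ∑ y ∈ T, sign2 (w ⬝ᵥ (x + y)) := by
  simp only [sq, walsh, sum_mul_sum, dotProduct_add, sign2_add]

theorem walsh_pow_three (w : Fin n → ZMod 2) :
    walsh T w ^ 3 = ∑ x ∈ T, ∑ y ∈ T, ∑ z ∈ T, sign2 (w ⬝ᵥ (x + y + z)) := by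
  rw [pow_succ, walsh_sq, walsh, sum_mul]
  refine sum_congr rfl fun x _ => ?_
  rw [sum_mul]
  refine sum_congr rfl fun y _ => ?_
  simp only [mul_sum, dotProduct_add, sign2_add]

theorem sum_walsh (h0 : 0 ∉ T) : ∑ w, walsh T w = 0 := by
  simp only [walsh]
  rw [sum_comm]
  refine sum_eq_zero fun x hx => ?_
  rw [sum_sign2_dotProduct, if_neg (ne_of_mem_of_not_mem hx h0)]

theorem sum_walsh_sq : ∑ w, walsh T w ^ 2 = 2 ^ n * #T := by
  simp_rw [walsh_sq]
  rw [sum_comm]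
  have hdiag : ∀ x ∈ T, ∑ y ∈ T, ∑ w, sign2 (w ⬝ᵥ (x + y)) = 2 ^ n := by
    intro x hx
    simp only [sum_sign2_dotProduct, add_eq_zero_iff_eq_neg, ZModModule.neg_eq_self, sum_ite_eq,
      hx, if_true]
  rw [sum_congr rfl fun x _ => sum_comm, sum_congr rfl hdiag]
  simp [mul_comm]

theorem sum_walsh_pow_three_nonneg : 0 ≤ ∑ w, walsh T w ^ 3 := by
  simp_rw [walsh_pow_three]
  rw [sum_comm]
  refine sum_nonneg fun x _ => ?_
  rw [sum_comm]
  refine sum_nonneg fun y _ => ?_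
  rw [sum_comm]
  exact sum_nonneg fun z _ => sum_sign2_dotProduct_nonneg _

theorem le_two_of_forall_dvd_card_filter_dotProduct_eq_one {a : ℕ} (h0 : 0 ∉ T)
    (hcard : #T = 2 * a + 1) (hdvd : ∀ w, a ∣ #{x ∈ T | w ⬝ᵥ x = 1}) : a ≤ 2 := by
  by_contra! ha
  have hcubic : ∀ w, (walsh T w - 1) ^ 3 = (2 * a : ℤ) ^ 2 * (walsh T w - 1) := by
    intro w
    have hle : #{x ∈ T | w ⬝ᵥ x = 1} ≤ 2 * a + 1 := hcard ▸ card_filter_le _ _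
    rw [walsh_eq_card_sub, hcard]
    rcases Nat.eq_zero_or_eq_or_eq_two_mul_of_dvd_of_le (by omega) (hdvd w) hle with h | h | h <;>
      rw [h] <;> push_cast <;> ring
  have hthird : ∑ w, walsh T w ^ 3
      = 3 * ∑ w, walsh T w ^ 2 - (3 - (2 * a : ℤ) ^ 2) * ∑ w, walsh T w
        - ((2 * a : ℤ) ^ 2 - 1) * 2 ^ n := by
    have hpointwise : ∀ w, walsh T w ^ 3 = 3 * walsh T w ^ 2
        - (3 - (2 * a : ℤ) ^ 2) * walsh T w - ((2 * a : ℤ) ^ 2 - 1) := fun w => by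
      linear_combination hcubic w
    simp only [hpointwise, sum_sub_distrib, ← mul_sum, sum_const, card_univ, Fintype.card_fun,
      ZMod.card, Fintype.card_fin, nsmul_eq_mul]
    push_cast
    ring
  rw [sum_walsh_sq, sum_walsh T h0, hcard] at hthird
  have hnonneg := sum_walsh_pow_three_nonneg T
  have hpos : (0 : ℤ) < 2 ^ n := by positivity
  have hneg : (0 : ℤ) < 2 ^ n * ((2 * a + 1) * (a - 2)) :=
    mul_pos hpos (mul_pos (by positivity) (by omega))
  push_cast at hthird
  nlinarith

end Walsh

theorem no_partition_type_six_general (t k : ℕ) (hk : 4 ≤ k)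
    (nk nk1 : ℕ) :
    ¬ ∃ P : Finset (Submodule (ZMod 2) (Fin (k * (t + 1) + 1) → ZMod 2)),
        (⊥ ∉ P) ∧
        (∀ v : Fin (k * (t + 1) + 1) → ZMod 2, v ≠ 0 → ∃! U, U ∈ P ∧ v ∈ U) ∧
        (∀ U ∈ P, Module.finrank (ZMod 2) U = k ∨
          Module.finrank (ZMod 2) U = k - 1 ∨ Module.finrank (ZMod 2) U = 1) ∧
        (P.filter (fun (U : Submodule (ZMod 2) (Fin (k * (t + 1) + 1) → ZMod 2)) =>
          Module.finrank (ZMod 2) ↥U = k)).card = nk ∧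
        (P.filter (fun (U : Submodule (ZMod 2) (Fin (k * (t + 1) + 1) → ZMod 2)) =>
          Module.finrank (ZMod 2) ↥U = k - 1)).card = nk1 ∧
        (P.filter (fun (U : Submodule (ZMod 2) (Fin (k * (t + 1) + 1) → ZMod 2)) =>
          Module.finrank (ZMod 2) ↥U = 1)).card = 1 + 2 ^ (k - 1) := by
  rintro ⟨P, -, hP, hdim, -, -, hcard₁⟩
  have hk_lt : k - 2 < finrank (ZMod 2) (Fin (k * (t + 1) + 1) → ZMod 2) := by
    have : k ≤ k * (t + 1) := Nat.le_mul_of_pos_right k (by omega)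
    rw [finrank_fin_fun]
    omega
  have hdvd := two_pow_dvd_card_filter_tailVectors hP
    (fun U hU h1 => by rcases hdim U hU with h | h | h <;> omega) hk_lt
  have hcard : #(tailVectors P) = 2 * 2 ^ (k - 2) + 1 := by
    rw [card_tailVectors hP, hcard₁, ← pow_succ', show k - 2 + 1 = k - 1 by omega, add_comm]
  have hle := le_two_of_forall_dvd_card_filter_dotProduct_eq_one _ zero_notMem_tailVectors hcard
    fun w => hdvd (dotProductBilin (ZMod 2) (ZMod 2) w)
  have : 2 ^ 2 ≤ 2 ^ (k - 2) := Nat.pow_le_pow_right two_pos (by omega)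
  omega

/-- Lemma: for `t ≥ 1` and `k ≥ 4` there is no vector space partition of
`𝔽_2^{k(t+1)+1}` of type `k^{n_k} (k−1)^{n_{k−1}} 1^{1+2^{k−1}}`,
where `n_k = (2^{kt+2} + 2^k − 5)/(2^k − 1)` and `n_{k−1} = 2^{kt+2} − 3`. -/
theorem no_partition_type_six (t k : ℕ) (ht : 1 ≤ t) (hk : 4 ≤ k)
    (nk nk1 : ℕ)
    (hnk : nk = (2 ^ (k * t + 2) + 2 ^ k - 5) / (2 ^ k - 1))
    (hnk1 : nk1 = 2 ^ (k * t + 2) - 3) :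
    ¬ ∃ P : Finset (Submodule (ZMod 2) (Fin (k * (t + 1) + 1) → ZMod 2)),
        (⊥ ∉ P) ∧
        (∀ v : Fin (k * (t + 1) + 1) → ZMod 2, v ≠ 0 → ∃! U, U ∈ P ∧ v ∈ U) ∧
        (∀ U ∈ P, Module.finrank (ZMod 2) U = k ∨
          Module.finrank (ZMod 2) U = k - 1 ∨ Module.finrank (ZMod 2) U = 1) ∧
        (P.filter (fun (U : Submodule (ZMod 2) (Fin (k * (t + 1) + 1) → ZMod 2)) =>
          Module.finrank (ZMod 2) ↥U = k)).card = nk ∧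
        (P.filter (fun (U : Submodule (ZMod 2) (Fin (k * (t + 1) + 1) → ZMod 2)) =>
          Module.finrank (ZMod 2) ↥U = k - 1)).card = nk1 ∧
        (P.filter (fun (U : Submodule (ZMod 2) (Fin (k * (t + 1) + 1) → ZMod 2)) =>
          Module.finrank (ZMod 2) ↥U = 1)).card = 1 + 2 ^ (k - 1) :=
  no_partition_type_six_general t k hk nk nk1
end

section
/- Let q ≥ 2 be an integer and let r, k be integers with r ≥ 1 and k ≥ 2r. Let θ be the real number satisfying 2θ = √(1 + 4q^k(q^k − q^r)) − (2q^k − 2q^r + 1). Then ⌊θ⌋ = ⌊(q^r − 2)/2⌋; in particular ⌊θ⌋ = (q^r − 2)/2 if q is even and ⌊θ⌋ = (q^r − 3)/2 if q is odd. -/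
/-!
Write `P = q^r`, `Q = q^k` and `y = 2Q - P`, so that `1 + 4Q(Q - P) = y² - (P² - 1)`.
Since `P > 1` the square root lies below `y`, and since `Q ≥ P²` makes `y` large it lies at
least `y - 1`. Hence `P - 2 ≤ 2θ < P - 1`, which pins `⌊θ⌋` to `⌊(P - 2)/2⌋`.
-/

namespace FloorTheta

lemma sqrt_lt_two_mul_sub {P Q : ℝ} (hP : 1 < P) (hPQ : P ^ 2 ≤ Q) :
    √(1 + 4 * Q * (Q - P)) < 2 * Q - P := by
  have hy : 0 < 2 * Q - P := by nlinarith
  rw [Real.sqrt_lt' hy]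
  nlinarith

lemma two_mul_sub_sub_one_le_sqrt {P Q : ℝ} (hP : 1 < P) (hPQ : P ^ 2 ≤ Q) :
    2 * Q - P - 1 ≤ √(1 + 4 * Q * (Q - P)) :=
  (le_abs_self _).trans (Real.abs_le_sqrt (by nlinarith))

lemma floor_eq_floor_half {n : ℤ} {x : ℝ} (h₁ : (n : ℝ) / 2 ≤ x) (h₂ : x < (n + 1) / 2) :
    ⌊x⌋ = ⌊(n : ℝ) / 2⌋ := by
  refine le_antisymm ?_ (Int.floor_mono h₁)
  rw [Int.le_floor]
  have : (2 * ⌊x⌋ : ℝ) < n + 1 := by linarith [Int.floor_le x]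
  have : 2 * ⌊x⌋ ≤ n := by exact_mod_cast Int.lt_add_one_iff.mp (by exact_mod_cast this)
  have : (2 * ⌊x⌋ : ℝ) ≤ n := by exact_mod_cast this
  linarith

lemma floor_half_of_even {n : ℤ} (hn : Even n) : (⌊(n : ℝ) / 2⌋ : ℝ) = n / 2 := by
  obtain ⟨t, rfl⟩ := hn
  push_cast
  rw [show ((t : ℝ) + t) / 2 = t by ring, Int.floor_intCast]

lemma floor_half_of_odd {n : ℤ} (hn : Odd n) : (⌊(n : ℝ) / 2⌋ : ℝ) = (n - 1) / 2 := by
  obtain ⟨t, rfl⟩ := hn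
  have : ⌊((2 * t + 1 : ℤ) : ℝ) / 2⌋ = t := by
    rw [Int.floor_eq_iff]; push_cast; constructor <;> linarith
  rw [this]; push_cast; ring

end FloorTheta

open FloorTheta in
/-- For integers `q ≥ 2`, `r ≥ 1`, `k ≥ 2r`, the number `θ` with
`2θ = √(1 + 4q^k(q^k − q^r)) − (2q^k − 2q^r + 1)` satisfies
`⌊θ⌋ = ⌊(q^r − 2)/2⌋`; in particular `⌊θ⌋ = (q^r − 2)/2` for `q` even and
`⌊θ⌋ = (q^r − 3)/2` for `q` odd. -/
theorem floor_theta_eq (q r k : ℕ) (hq : 2 ≤ q) (hr : 1 ≤ r) (hk : 2 * r ≤ k)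
    (θ : ℝ)
    (hθ : 2 * θ = Real.sqrt (1 + 4 * (q : ℝ) ^ k * ((q : ℝ) ^ k - (q : ℝ) ^ r))
        - (2 * (q : ℝ) ^ k - 2 * (q : ℝ) ^ r + 1)) :
    ⌊θ⌋ = ⌊((q : ℝ) ^ r - 2) / 2⌋ ∧
    (Even q → (⌊θ⌋ : ℝ) = ((q : ℝ) ^ r - 2) / 2) ∧
    (Odd q → (⌊θ⌋ : ℝ) = ((q : ℝ) ^ r - 3) / 2) := by
  have hq' : (1 : ℝ) < q := by exact_mod_cast hq
  have hP : 1 < (q : ℝ) ^ r := one_lt_pow₀ hq' (by omega)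
  have hPQ : ((q : ℝ) ^ r) ^ 2 ≤ (q : ℝ) ^ k := by
    rw [← pow_mul, mul_comm]; exact pow_le_pow_right₀ hq'.le hk
  set n : ℤ := (q : ℤ) ^ r - 2
  have hn : (n : ℝ) = (q : ℝ) ^ r - 2 := by push_cast [n]; rfl
  have hfloor : ⌊θ⌋ = ⌊(n : ℝ) / 2⌋ := by
    refine floor_eq_floor_half ?_ ?_
    · linarith [two_mul_sub_sub_one_le_sqrt hP hPQ]
    · linarith [sqrt_lt_two_mul_sub hP hPQ]
  refine ⟨hn ▸ hfloor, fun hev => ?_, fun hodd => ?_⟩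
  · have : Even n := (Int.even_pow.mpr ⟨by exact_mod_cast hev, by omega⟩).sub even_two
    rw [hfloor, floor_half_of_even this, hn]
  · have : Odd n := (hodd.pow.natCast (R := ℤ)).sub_even even_two
    rw [hfloor, floor_half_of_odd this, hn]; ring
end

section
/- Let q ≥ 2 be an integer and let r, k be integers with r ≥ 1 and k ≥ 2r. Then the real number 2θ = √(1 + 4q^k(q^k − q^r)) − (2q^k − 2q^r + 1) satisfies q^r − 2 < 2θ < q^r − 1. -/
/-! With `x = q^k` and `y = q^r` we have `y > 1` and `x ≥ y²`, and the radicand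
`1 + 4x(x - y)` lies strictly between `(2x - y - 1)²` and `(2x - y)²`:
the upper gap is `y² - 1 > 0`, the lower one is `4x - y² - 2y ≥ 3y² - 2y > 0`. -/

section SqrtBounds

variable {x y : ℝ}

theorem two_mul_sub_sub_one_lt_sqrt (hy : 1 < y) (hx : y ^ 2 ≤ x) :
    2 * x - y - 1 < √(1 + 4 * x * (x - y)) :=
  Real.lt_sqrt_of_sq_lt (by nlinarith)

theorem sqrt_lt_two_mul_sub (hy : 1 < y) (hx : y ^ 2 ≤ x) :
    √(1 + 4 * x * (x - y)) < 2 * x - y :=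
  (Real.sqrt_lt' (by nlinarith)).2 (by nlinarith)

end SqrtBounds

/-- For integers `q ≥ 2`, `r ≥ 1`, `k ≥ 2r`, the real number
`2θ = √(1 + 4q^k(q^k − q^r)) − (2q^k − 2q^r + 1)` satisfies
`q^r − 2 < 2θ < q^r − 1`. -/
theorem two_theta_bounds (q r k : ℕ) (hq : 2 ≤ q) (hr : 1 ≤ r) (hk : 2 * r ≤ k)
    (θ : ℝ)
    (hθ : 2 * θ = Real.sqrt (1 + 4 * (q : ℝ) ^ k * ((q : ℝ) ^ k - (q : ℝ) ^ r))
        - (2 * (q : ℝ) ^ k - 2 * (q : ℝ) ^ r + 1)) :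
    (q : ℝ) ^ r - 2 < 2 * θ ∧ 2 * θ < (q : ℝ) ^ r - 1 := by
  have hy : 1 < (q : ℝ) ^ r := one_lt_pow₀ (by exact_mod_cast hq) (by omega)
  have hx : ((q : ℝ) ^ r) ^ 2 ≤ (q : ℝ) ^ k := by
    rw [← pow_mul, mul_comm]
    exact pow_le_pow_right₀ (by exact_mod_cast hq.trans' one_le_two) hk
  have lower := two_mul_sub_sub_one_lt_sqrt hy hx
  have upper := sqrt_lt_two_mul_sub hy hx
  constructor <;> linarith
end

section
/- Let S be a partial 3-spread in 𝔽_2^8 of cardinality 34. For each hyperplane H (7-dimensional subspace) of 𝔽_2^8, let c(H) be the number of members of S contained in H, and for each integer i let a_i be the number of hyperplanes H with c(H) = i. Then a_i = 0 for i ∉ {2,3,4,5}, and a_2 = 51 − a_5, a_3 = 3a_5 − 136, a_4 = 340 − 3a_5; in particular 46 ≤ a_5 ≤ 51. -/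
def IsPartialThreeSpread (S : Finset (Submodule (ZMod 2) (Fin 8 → ZMod 2))) : Prop :=
  (∀ U ∈ S, Module.finrank (ZMod 2) U = 3) ∧
  ∀ U ∈ S, ∀ V ∈ S, U ≠ V → U ⊓ V = ⊥

/-!
Call a nonzero vector that lies in no member of `S` a hole. Counting vectors gives
`255 - 34 * 7 = 17` holes, and a hyperplane `H` containing `c` members of `S` meets each of the
other members in a plane, so it contains `127 - 7 c - 3 (34 - c) = 25 - 4 c` holes; hence
`2 ≤ c ≤ 6`. Summing over the three hyperplanes through a subspace `K` of codimension `2` shows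
that `K` contains an odd number of holes. A hyperplane with `c = 6` contains a single hole, and a
codimension-`2` subspace inside it avoiding that hole would contain none, so `c ≤ 5`.
Finally, double counting gives `∑ 1 = 255`, `∑ c = 34 * 31` and `∑ c ^ 2 = 34 * 31 + 34 * 33 * 3`
over all hyperplanes, a linear system in `a 2, …, a 5` whose solutions are the claimed ones.
-/

open Module Finset
open scoped Classical

lemma Module.Dual.exists_ker_eq {K V : Type*} [Field K] [AddCommGroup V] [Module K V]
    [FiniteDimensional K V] {H : Submodule K V} (hH : finrank K H + 1 = finrank K V) :
    ∃ f : Dual K V, LinearMap.ker f = H := by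
  have hquot : finrank K (V ⧸ H) = finrank K K := by
    have := H.finrank_quotient_add_finrank
    rw [finrank_self]
    omega
  obtain ⟨e⟩ := FiniteDimensional.nonempty_linearEquiv_of_finrank_eq hquot
  exact ⟨e.toLinearMap ∘ₗ H.mkQ, by
    rw [LinearMap.ker_comp, LinearEquiv.ker, Submodule.comap_bot, Submodule.ker_mkQ]⟩

lemma Submodule.finrank_inf_add_one_of_not_le {K V : Type*} [Field K] [AddCommGroup V]
    [Module K V] [FiniteDimensional K V] {U H : Submodule K V}
    (hH : finrank K H + 1 = finrank K V) (hUH : ¬U ≤ H) :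
    finrank K (U ⊓ H : Submodule K V) + 1 = finrank K U := by
  have hlt : H < U ⊔ H := lt_of_le_of_ne le_sup_right fun h => hUH (h ▸ le_sup_left)
  have hsup : finrank K (U ⊔ H : Submodule K V) = finrank K V :=
    le_antisymm (Submodule.finrank_le _) (by have := Submodule.finrank_lt_finrank_of_lt hlt; omega)
  have := Submodule.finrank_sup_add_finrank_inf_eq U H
  omega

lemma Submodule.exists_finrank_add_one_eq_notMem {K V : Type*} [Field K] [AddCommGroup V]
    [Module K V] [FiniteDimensional K V] {H : Submodule K V} {x : V} (hx : x ≠ 0) (hxH : x ∈ H) :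
    ∃ L ≤ H, finrank K L + 1 = finrank K H ∧ x ∉ L := by
  obtain ⟨f, hf⟩ := Module.Projective.exists_dual_ne_zero K hx
  have hf0 : f ≠ 0 := fun h => hf (by rw [h, LinearMap.zero_apply])
  refine ⟨H ⊓ LinearMap.ker f, inf_le_left,
    finrank_inf_add_one_of_not_le (Module.Dual.finrank_ker_add_one_of_ne_zero hf0)
      fun hle => hf (hle hxH), fun hxL => hf (Submodule.mem_inf.1 hxL).2⟩

lemma Module.natCard_eq_two_pow_finrank (M : Type*) [AddCommGroup M] [Module (ZMod 2) M]
    [Module.Finite (ZMod 2) M] : Nat.card M = 2 ^ finrank (ZMod 2) M := by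
  rw [Module.natCard_eq_pow_finrank (K := ZMod 2), Nat.card_zmod]

lemma Module.Dual.ker_injective_zmod_two {V : Type*} [AddCommGroup V] [Module (ZMod 2) V]
    [FiniteDimensional (ZMod 2) V] :
    Function.Injective fun f : Dual (ZMod 2) V => LinearMap.ker f := by
  intro f g (hfg : LinearMap.ker f = LinearMap.ker g)
  by_cases hf : f = 0
  · subst hf
    rw [LinearMap.ker_zero, eq_comm, LinearMap.ker_eq_top] at hfg
    exact hfg.symm
  obtain ⟨x, hx⟩ : ∃ x, f x ≠ 0 := by
    by_contra! h
    exact hf (LinearMap.ext h)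
  have hgx : g x ≠ 0 := fun h => hx (by rwa [← LinearMap.mem_ker, hfg])
  -- over `𝔽₂` the only nonzero scalar is `1`
  exact Module.Dual.eq_of_ker_eq_of_apply_eq x hfg
    (by rw [Fin.eq_one_of_ne_zero _ hx, Fin.eq_one_of_ne_zero _ hgx]) hx

lemma Finset.sum_comp_eq_sum_card_filter_smul {ι κ M : Type*} [AddCommMonoid M] [DecidableEq κ]
    {s : Finset ι} {t : Finset κ} {c : ι → κ} (h : ∀ x ∈ s, c x ∈ t) (g : κ → M) :
    ∑ x ∈ s, g (c x) = ∑ i ∈ t, #{x ∈ s | c x = i} • g i := by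
  rw [← sum_fiberwise_of_maps_to h]
  exact sum_congr rfl fun i _ => by
    rw [sum_congr rfl fun x hx => by rw [(mem_filter.1 hx).2], sum_const]

section Hyperplanes

variable {V : Type*} [AddCommGroup V] [Module (ZMod 2) V] [Finite V]

variable (V) in
noncomputable def hyperplanes : Finset (Submodule (ZMod 2) V) :=
  (Set.toFinite {H : Submodule (ZMod 2) V | finrank (ZMod 2) H + 1 = finrank (ZMod 2) V}).toFinset

lemma mem_hyperplanes {H : Submodule (ZMod 2) V} :
    H ∈ hyperplanes V ↔ finrank (ZMod 2) H + 1 = finrank (ZMod 2) V :=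
  Set.Finite.mem_toFinset _

lemma card_hyperplanes_above (W : Submodule (ZMod 2) V) :
    #{H ∈ hyperplanes V | W ≤ H} = 2 ^ (finrank (ZMod 2) V - finrank (ZMod 2) W) - 1 := by
  have himage : (({H ∈ hyperplanes V | W ≤ H} : Finset _) : Set (Submodule (ZMod 2) V)) =
      (fun f : Dual (ZMod 2) V => LinearMap.ker f) '' ((W.dualAnnihilator : Set _) \ {0}) := by
    ext H
    simp only [coe_filter, mem_hyperplanes, Set.mem_ofPred_eq, Set.mem_image, Set.mem_sdiff,
      SetLike.mem_coe, Submodule.mem_dualAnnihilator, Set.mem_singleton_iff]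
    constructor
    · rintro ⟨hH, hWH⟩
      obtain ⟨f, rfl⟩ := Module.Dual.exists_ker_eq hH
      refine ⟨f, ⟨fun w hw => hWH hw, ?_⟩, rfl⟩
      rintro rfl
      rw [LinearMap.ker_zero, finrank_top] at hH
      omega
    · rintro ⟨f, ⟨hfW, hf⟩, rfl⟩
      exact ⟨Module.Dual.finrank_ker_add_one_of_ne_zero hf, fun w hw => hfW w hw⟩
  have hann := Subspace.finrank_add_finrank_dualAnnihilator_eq W
  rw [← Set.ncard_coe_finset, himage, Module.Dual.ker_injective_zmod_two.injOn.ncard_image,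
    Set.ncard_sdiff_singleton_of_mem (Submodule.zero_mem _), ← Nat.card_coe_set_eq]
  change Nat.card W.dualAnnihilator - 1 = _
  rw [Module.natCard_eq_two_pow_finrank]
  congr 2
  omega

lemma card_hyperplanes : #(hyperplanes V) = 2 ^ finrank (ZMod 2) V - 1 := by
  simpa using card_hyperplanes_above (⊥ : Submodule (ZMod 2) V)

lemma sum_card_filter_le_hyperplanes (S : Finset (Submodule (ZMod 2) V)) :
    ∑ H ∈ hyperplanes V, #{U ∈ S | U ≤ H} =
      ∑ U ∈ S, (2 ^ (finrank (ZMod 2) V - finrank (ZMod 2) U) - 1) := by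
  simp only [card_filter]
  rw [sum_comm]
  exact sum_congr rfl fun U _ => by rw [← card_filter, card_hyperplanes_above]

lemma sum_sq_card_filter_le_hyperplanes (S : Finset (Submodule (ZMod 2) V)) :
    ∑ H ∈ hyperplanes V, #{U ∈ S | U ≤ H} ^ 2 =
      ∑ U ∈ S, ∑ W ∈ S,
        (2 ^ (finrank (ZMod 2) V - finrank (ZMod 2) (U ⊔ W : Submodule (ZMod 2) V)) - 1) := by
  have hsq : ∀ H, #{U ∈ S | U ≤ H} ^ 2 = ∑ U ∈ S, ∑ W ∈ S, if U ⊔ W ≤ H then 1 else 0 := by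
    intro H
    rw [sq, card_filter, sum_mul_sum]
    refine sum_congr rfl fun U _ => sum_congr rfl fun W _ => ?_
    by_cases hU : U ≤ H <;> by_cases hW : W ≤ H <;> simp [hU, hW]
  simp_rw [hsq]
  rw [sum_comm]
  refine sum_congr rfl fun U _ => ?_
  rw [sum_comm]
  exact sum_congr rfl fun W _ => by rw [← card_filter, card_hyperplanes_above]

end Hyperplanes

section Holes

variable {V : Type*} [AddCommGroup V] [Module (ZMod 2) V] [Fintype V]

noncomputable def points (A : Submodule (ZMod 2) V) : Finset V := {x | x ∈ A ∧ x ≠ 0}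

noncomputable def holes (S : Finset (Submodule (ZMod 2) V)) : Finset V :=
  {x | x ≠ 0 ∧ ∀ U ∈ S, x ∉ U}

lemma card_points (A : Submodule (ZMod 2) V) : #(points A) = 2 ^ finrank (ZMod 2) A - 1 := by
  have hcoe : (points A : Set V) = (A : Set V) \ {0} := by
    ext x
    simp [points]
  rw [← Set.ncard_coe_finset, hcoe, Set.ncard_sdiff_singleton_of_mem A.zero_mem,
    ← Nat.card_coe_set_eq]
  exact congrArg (· - 1) (Module.natCard_eq_two_pow_finrank A)

lemma card_points_eq_sum_add_card_holes {S : Finset (Submodule (ZMod 2) V)}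
    (hS : ∀ U ∈ S, ∀ W ∈ S, U ≠ W → U ⊓ W = ⊥) (A : Submodule (ZMod 2) V) :
    #(points A) = ∑ U ∈ S, #(points (U ⊓ A)) + #{x ∈ holes S | x ∈ A} := by
  have hsplit : points A = S.biUnion (fun U => points (U ⊓ A)) ∪ {x ∈ holes S | x ∈ A} := by
    ext x
    simp only [points, holes, mem_union, mem_biUnion, mem_filter, mem_univ, true_and,
      Submodule.mem_inf]
    grind
  have hdisj : Disjoint (S.biUnion fun U => points (U ⊓ A)) {x ∈ holes S | x ∈ A} := by
    simp only [disjoint_left, mem_biUnion, points, holes, mem_filter, mem_univ, true_and,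
      Submodule.mem_inf]
    grind
  have hpw : (S : Set (Submodule (ZMod 2) V)).PairwiseDisjoint fun U => points (U ⊓ A) := by
    intro U hU W hW hUW
    simp only [Function.onFun, disjoint_left, points, mem_filter, mem_univ, true_and,
      Submodule.mem_inf]
    intro x ⟨⟨hxU, _⟩, hx0⟩ ⟨⟨hxW, _⟩, _⟩
    have hxUW : x ∈ U ⊓ W := Submodule.mem_inf.2 ⟨hxU, hxW⟩
    rw [hS U hU W hW hUW, Submodule.mem_bot] at hxUW
    exact hx0 hxUW
  rw [hsplit, card_union_of_disjoint hdisj, card_biUnion hpw]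

lemma sum_card_filter_mem_hyperplanes_above (D : Finset V) {K : Submodule (ZMod 2) V}
    (hK : finrank (ZMod 2) K + 2 = finrank (ZMod 2) V) :
    ∑ H ∈ hyperplanes V with K ≤ H, #{x ∈ D | x ∈ H} = #D + 2 * #{x ∈ D | x ∈ K} := by
  have hcount : ∀ x, #{H ∈ hyperplanes V | K ≤ H ∧ x ∈ H} = 1 + 2 * if x ∈ K then 1 else 0 := by
    intro x
    by_cases hxK : x ∈ K
    · simp_rw [and_iff_left_of_imp fun (hKH : K ≤ _) => hKH hxK]
      rw [card_hyperplanes_above, if_pos hxK,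
        show finrank (ZMod 2) V - finrank (ZMod 2) K = 2 by omega]
      rfl
    · have hsup : ∀ H, K ≤ H ∧ x ∈ H ↔ K ⊔ Submodule.span (ZMod 2) {x} ≤ H := fun H => by
        rw [sup_le_iff, Submodule.span_singleton_le_iff_mem]
      simp_rw [hsup]
      rw [card_hyperplanes_above, Submodule.finrank_sup_span_singleton hxK, if_neg hxK,
        show finrank (ZMod 2) V - (finrank (ZMod 2) K + 1) = 1 by omega]
      rfl
  simp only [card_filter]
  rw [sum_comm]
  simp_rw [← card_filter, filter_filter, hcount]
  rw [sum_add_distrib, ← mul_sum, ← card_filter]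
  simp

end Holes

local notation "𝔽₂⁸" => Fin 8 → ZMod 2

namespace IsPartialThreeSpread

variable {S : Finset (Submodule (ZMod 2) 𝔽₂⁸)}

lemma card_holes (hS : IsPartialThreeSpread S) (hcard : #S = 34) : #(holes S) = 17 := by
  have h := card_points_eq_sum_add_card_holes hS.2 ⊤
  rw [sum_congr rfl fun U hU => by rw [inf_top_eq, card_points, hS.1 U hU],
    filter_true_of_mem fun x _ => Submodule.mem_top, card_points, finrank_top, sum_const,
    hcard] at h
  simp only [finrank_fin_fun, smul_eq_mul] at h
  omega

lemma card_holes_mem_hyperplane (hS : IsPartialThreeSpread S) (hcard : #S = 34)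
    {H : Submodule (ZMod 2) 𝔽₂⁸} (hH : H ∈ hyperplanes 𝔽₂⁸) :
    #{x ∈ holes S | x ∈ H} + 4 * #{U ∈ S | U ≤ H} = 25 := by
  rw [mem_hyperplanes, finrank_fin_fun] at hH
  have hpoints : ∀ U ∈ S, #(points (U ⊓ H)) = 3 + 4 * if U ≤ H then 1 else 0 := by
    intro U hU
    rw [card_points]
    by_cases hUH : U ≤ H
    · rw [inf_eq_left.2 hUH, hS.1 U hU, if_pos hUH]
      rfl
    · have hinf := Submodule.finrank_inf_add_one_of_not_le
        (hH.trans (finrank_fin_fun _).symm) hUH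
      rw [hS.1 U hU] at hinf
      rw [show finrank (ZMod 2) (U ⊓ H : Submodule (ZMod 2) 𝔽₂⁸) = 2 by omega, if_neg hUH]
      rfl
  have h := card_points_eq_sum_add_card_holes hS.2 H
  rw [sum_congr rfl hpoints, sum_add_distrib, ← mul_sum, ← card_filter, sum_const, hcard,
    card_points, show finrank (ZMod 2) H = 7 by omega] at h
  simp only [smul_eq_mul] at h
  omega

lemma odd_card_holes_mem (hS : IsPartialThreeSpread S) (hcard : #S = 34)
    {K : Submodule (ZMod 2) 𝔽₂⁸} (hK : finrank (ZMod 2) K + 2 = 8) :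
    Odd #{x ∈ holes S | x ∈ K} := by
  have hK' : finrank (ZMod 2) K + 2 = finrank (ZMod 2) 𝔽₂⁸ := by rw [hK, finrank_fin_fun]
  have hrel : ∑ H ∈ hyperplanes 𝔽₂⁸ with K ≤ H,
      (#{x ∈ holes S | x ∈ H} + 4 * #{U ∈ S | U ≤ H}) = 75 := by
    rw [sum_congr rfl fun H hH => card_holes_mem_hyperplane hS hcard (mem_filter.1 hH).1,
      sum_const, card_hyperplanes_above, ← hK']
    simp
  rw [sum_add_distrib, ← mul_sum, sum_card_filter_mem_hyperplanes_above _ hK',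
    card_holes hS hcard] at hrel
  rw [Nat.odd_iff]
  omega

lemma card_filter_le_hyperplane_mem_Icc (hS : IsPartialThreeSpread S) (hcard : #S = 34)
    {H : Submodule (ZMod 2) 𝔽₂⁸} (hH : H ∈ hyperplanes 𝔽₂⁸) :
    #{U ∈ S | U ≤ H} ∈ Icc 2 5 := by
  have hrel := card_holes_mem_hyperplane hS hcard hH
  have hle : #{x ∈ holes S | x ∈ H} ≤ 17 := card_holes hS hcard ▸ card_filter_le _ _
  refine mem_Icc.2 ⟨by omega, ?_⟩
  by_contra! hgt
  obtain ⟨x, hx⟩ := card_eq_one.1 (show #{x ∈ holes S | x ∈ H} = 1 by omega)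
  have hxH : x ∈ {x ∈ holes S | x ∈ H} := hx ▸ mem_singleton_self x
  simp only [holes, mem_filter, mem_univ, true_and] at hxH
  obtain ⟨L, hLH, hL, hxL⟩ := Submodule.exists_finrank_add_one_eq_notMem hxH.1.1 hxH.2
  have hempty : #{y ∈ holes S | y ∈ L} = 0 := by
    refine card_eq_zero.2 (filter_eq_empty_iff.2 fun y hy hyL => hxL ?_)
    have hyH : y ∈ {x ∈ holes S | x ∈ H} := mem_filter.2 ⟨hy, hLH hyL⟩
    rw [hx, mem_singleton] at hyH
    exact hyH ▸ hyL
  have hodd := odd_card_holes_mem hS hcard (K := L) (by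
    rw [mem_hyperplanes, finrank_fin_fun] at hH; omega)
  rw [hempty] at hodd
  exact Nat.not_odd_zero hodd

lemma sum_card_filter_le_hyperplanes_eq (hS : IsPartialThreeSpread S) (hcard : #S = 34) :
    ∑ H ∈ hyperplanes 𝔽₂⁸, #{U ∈ S | U ≤ H} = 1054 := by
  rw [sum_card_filter_le_hyperplanes,
    sum_congr rfl fun U hU => by rw [hS.1 U hU, finrank_fin_fun], sum_const, hcard]
  rfl

lemma sum_sq_card_filter_le_hyperplanes_eq (hS : IsPartialThreeSpread S) (hcard : #S = 34) :
    ∑ H ∈ hyperplanes 𝔽₂⁸, #{U ∈ S | U ≤ H} ^ 2 = 4420 := by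
  have hpair : ∀ U ∈ S, ∀ W ∈ S,
      2 ^ (finrank (ZMod 2) 𝔽₂⁸ - finrank (ZMod 2) (U ⊔ W : Submodule (ZMod 2) 𝔽₂⁸)) - 1 =
        3 + 28 * if U = W then 1 else 0 := by
    intro U hU W hW
    by_cases hUW : U = W
    · rw [hUW, sup_idem, hS.1 W hW, if_pos rfl, finrank_fin_fun]
      rfl
    · have hsup := Submodule.finrank_sup_add_finrank_inf_eq U W
      rw [hS.2 U hU W hW hUW, finrank_bot, hS.1 U hU, hS.1 W hW] at hsup
      rw [show finrank (ZMod 2) (U ⊔ W : Submodule (ZMod 2) 𝔽₂⁸) = 6 by omega, if_neg hUW,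
        finrank_fin_fun]
      rfl
  rw [sum_sq_card_filter_le_hyperplanes, sum_congr rfl fun U hU => by
    rw [sum_congr rfl (hpair U hU), sum_add_distrib, ← mul_sum, sum_ite_eq, if_pos hU]]
  simp [hcard]

end IsPartialThreeSpread

/-- Spectrum of hyperplanes for a maximum partial `3`-spread in `𝔽_2^8`:
if `S` is a partial `3`-spread of cardinality `34`, `c H` counts the members of
`S` contained in a hyperplane `H`, and `a i` counts the hyperplanes `H` with
`c H = i`, then `a i = 0` for `i ∉ {2,3,4,5}`, `a 2 = 51 − a 5`,
`a 3 = 3·a 5 − 136`, `a 4 = 340 − 3·a 5`, and `46 ≤ a 5 ≤ 51`. -/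
theorem hyperplane_spectrum (S : Finset (Submodule (ZMod 2) (Fin 8 → ZMod 2)))
    (hS : IsPartialThreeSpread S) (hcard : S.card = 34)
    (c : Submodule (ZMod 2) (Fin 8 → ZMod 2) → ℕ)
    (hc : ∀ H, c H = {U : Submodule (ZMod 2) (Fin 8 → ZMod 2) | U ∈ S ∧ U ≤ H}.ncard)
    (a : ℕ → ℕ)
    (ha : ∀ i, a i = {H : Submodule (ZMod 2) (Fin 8 → ZMod 2) |
        Module.finrank (ZMod 2) H = 7 ∧ c H = i}.ncard) :
    (∀ i, i ∉ ({2, 3, 4, 5} : Set ℕ) → a i = 0) ∧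
    (a 2 : ℤ) = 51 - (a 5 : ℤ) ∧
    (a 3 : ℤ) = 3 * (a 5 : ℤ) - 136 ∧
    (a 4 : ℤ) = 340 - 3 * (a 5 : ℤ) ∧
    46 ≤ a 5 ∧ a 5 ≤ 51 := by
  have hc' : ∀ H, c H = #{U ∈ S | U ≤ H} := fun H => by
    rw [hc, ← Set.ncard_coe_finset, coe_filter]
  have ha' : ∀ i, a i = #{H ∈ hyperplanes 𝔽₂⁸ | c H = i} := fun i => by
    rw [ha, ← Set.ncard_coe_finset, coe_filter]
    congr 1
    ext H
    simp [mem_hyperplanes]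
  have hrange : ∀ H ∈ hyperplanes 𝔽₂⁸, c H ∈ ({2, 3, 4, 5} : Finset ℕ) := fun H hH =>
    hc' H ▸ hS.card_filter_le_hyperplane_mem_Icc hcard hH
  have hmoment : ∀ g : ℕ → ℕ,
      ∑ H ∈ hyperplanes 𝔽₂⁸, g (c H) = ∑ i ∈ {2, 3, 4, 5}, a i • g i := fun g => by
    simp_rw [sum_comp_eq_sum_card_filter_smul hrange, ha']
  have h0 := hmoment fun _ => 1
  have h1 := hmoment id
  have h2 := hmoment (· ^ 2)
  simp only [sum_const, card_hyperplanes, finrank_fin_fun] at h0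
  simp_rw [hc', id] at h1 h2
  rw [hS.sum_card_filter_le_hyperplanes_eq hcard] at h1
  rw [hS.sum_sq_card_filter_le_hyperplanes_eq hcard] at h2
  simp only [Nat.reducePow, Nat.add_one_sub_one, smul_eq_mul, mul_one, mem_insert,
    Nat.reduceEqDiff, mem_singleton, or_self, not_false_eq_true, sum_insert, sum_singleton]
    at h0 h1 h2
  refine ⟨fun i hi => ?_, by omega, by omega, by omega, by omega, by omega⟩
  rw [ha', card_eq_zero, filter_eq_empty_iff]
  rintro H hH rfl
  exact hi (by simpa using hrange H hH)
end
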